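/- arXiv:1106.2512 — 5 statements merged into one kernel-verified Lean document; each statement's English description precedes it below -/
import Mathlib

section
/- Let I be a set, F a filter on I, and (X_j)_{j∈J} a family of topological spaces each satisfying the F-accumulation property. Then the Tychonoff product ∏_{j∈J} X_j satisfies the F-accumulation property. -/
/-- `z` is an `E`-accumulation point of the `I`-indexed sequence `x`. -/
def IsAccPt {I X : Type*} [TopologicalSpace X] (E : Set (Set I)) (x : I → X) (z : X) : Prop :=
  ∀ U : Set X, IsOpen U → z ∈ U → {i | x i ∈ U} ∈ E

/-- `X` satisfies the `E`-accumulation property. -/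
def AccProp {I : Type*} (X : Type*) [TopologicalSpace X] (E : Set (Set I)) : Prop :=
  ∀ x : I → X, ∃ z : X, IsAccPt E x z

/-- A filter in the classical sense: a nonempty proper family closed under
finite intersections and supersets. -/
structure IsSetFilter {I : Type*} (F : Set (Set I)) : Prop where
  nonempty : F.Nonempty
  proper : (∅ : Set I) ∉ F
  inter : ∀ A ∈ F, ∀ B ∈ F, A ∩ B ∈ F
  mono : ∀ A ∈ F, ∀ B : Set I, A ⊆ B → B ∈ F

open Filter Topology

def IsSetFilter.toFilter {I : Type*} {F : Set (Set I)} (hF : IsSetFilter F) : Filter I where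
  sets := F
  univ_sets := hF.nonempty.elim fun A hA => hF.mono A hA _ (Set.subset_univ A)
  sets_of_superset hA hAB := hF.mono _ hA _ hAB
  inter_sets hA hB := hF.inter _ hA _ hB

theorem isAccPt_iff_tendsto {I X : Type*} [TopologicalSpace X] (l : Filter I) (x : I → X)
    (z : X) : IsAccPt l.sets x z ↔ Tendsto x l (𝓝 z) := by
  rw [(nhds_basis_opens z).tendsto_right_iff]
  exact ⟨fun h U hU => h U hU.2 hU.1, fun h U hU hzU => h U ⟨hzU, hU⟩⟩

theorem AccProp.pi {I J : Type*} (l : Filter I) (X : J → Type*) [∀ j, TopologicalSpace (X j)]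
    (h : ∀ j, AccProp (X j) l.sets) : AccProp (∀ j, X j) l.sets := by
  intro x
  choose z hz using fun j => h j fun i => x i j
  refine ⟨z, (isAccPt_iff_tendsto l x z).2 (tendsto_pi_nhds.2 fun j => ?_)⟩
  exact (isAccPt_iff_tendsto l _ (z j)).1 (hz j)

theorem stmt3 {I J : Type*} (F : Set (Set I)) (hF : IsSetFilter F) (X : J → Type*)
    [∀ j, TopologicalSpace (X j)] (h : ∀ j, AccProp (X j) F) :
    AccProp (∀ j, X j) F :=
  AccProp.pi hF.toFilter X h
end

section
/- Let X be a topological space, I a set, and E ⊆ 𝒫(I) closed under taking supersets. If X satisfies the F-accumulation property for some filter F ⊆ E, then every power X^κ (with the product topology) satisfies the E-accumulation property. -/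
theorem stmt5 {I : Type*} (X : Type*) [TopologicalSpace X] (E : Set (Set I))
    (hE : ∀ A ∈ E, ∀ B : Set I, A ⊆ B → B ∈ E)
    (h : ∃ F : Set (Set I), IsSetFilter F ∧ F ⊆ E ∧ AccProp X F) :
    ∀ κ : Type*, AccProp (κ → X) E := by
  obtain ⟨F, hF, hFE, hAcc⟩ := h
  intro κ x
  -- Turn `F` into a Mathlib filter.
  let G : Filter I :=
    { sets := F
      univ_sets := by
        obtain ⟨A, hA⟩ := hF.nonempty
        exact hF.mono A hA Set.univ (Set.subset_univ A)
      sets_of_superset := fun {A B} hA hAB => hF.mono A hA B hAB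
      inter_sets := fun {A B} hA hB => hF.inter A hA B hB }
  -- For each coordinate k, pick a limit of the k-th coordinate sequence along G.
  have hlim : ∀ k : κ, ∃ z : X, Filter.Tendsto (fun i => x i k) G (nhds z) := by
    intro k
    obtain ⟨z, hz⟩ := hAcc (fun i => x i k)
    refine ⟨z, ?_⟩
    rw [tendsto_nhds]
    intro U hU hzU
    exact hz U hU hzU
  choose z hz using hlim
  refine ⟨z, ?_⟩
  have htend : Filter.Tendsto x G (nhds z) := by
    rw [tendsto_pi_nhds]
    exact hz
  intro U hU hzU
  have : {i | x i ∈ U} ∈ G := htend (hU.mem_nhds hzU)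
  exact hFE this
end

section
/- Let I be a set and E ⊆ 𝒫(I), and suppose there exists J ⊆ I such that neither J nor I \ J belongs to E. If a topological space X satisfies the E-accumulation property, then for every pair of distinct points x, y ∈ X there is a point z ∈ X such that every open neighborhood of z contains both x and y. -/
/-- A (set-)ultrafilter: a filter containing one of `J`, `Jᶜ` for every `J`. -/
def IsSetUltrafilter {I : Type*} (F : Set (Set I)) : Prop :=
  IsSetFilter F ∧ ∀ J : Set I, J ∈ F ∨ Jᶜ ∈ F

/-- The order type of a subset of a well-ordered type, with the inherited order. -/
noncomputable def setOType {β : Type*} [LinearOrder β] [WellFoundedLT β] (S : Set β) : Ordinal :=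
  Ordinal.type ((· < ·) : S → S → Prop)

/-- `X` satisfies the `α`-complete accumulation property `CAP*_α`: every `α`-indexed
sequence has a point all of whose open neighborhoods pick out a set of indices of
order type `α`. -/
def CAPstar (α : Ordinal) (X : Type*) [TopologicalSpace X] : Prop :=
  ∀ x : α.ToType → X, ∃ z : X, ∀ U : Set X, IsOpen U → z ∈ U →
    setOType {γ : α.ToType | x γ ∈ U} = α

/-!
Index the two points by `J`: the sequence equal to `x` on `J` and to `y` off `J`. The indices it
sends into an open set `U` form one of `∅`, `J`, `Jᶜ`, `univ`, so at an `E`-accumulation point `z`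
every open neighbourhood contains both or neither of `x`, `y`. If all of them contain both, take
`z`; otherwise an open `W ∋ z` misses both, and `x` works: for open `U ∋ x`, the neighbourhood
`U ∪ W` of `z` contains `x`, hence `y`, and `y ∉ W`.
-/

theorem IsAccPt.mem_iff_mem_of_piecewise {I X : Type*} [TopologicalSpace X] {E : Set (Set I)}
    {J : Set I} [DecidablePred (· ∈ J)] (hJ : J ∉ E) (hJc : Jᶜ ∉ E) {x y z : X}
    (hz : IsAccPt E (J.piecewise (fun _ ↦ x) (fun _ ↦ y)) z) {U : Set X} (hU : IsOpen U)
    (hzU : z ∈ U) : x ∈ U ↔ y ∈ U := by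
  have hE := hz U hU hzU
  constructor
  · intro hx
    by_contra hy
    exact hJ (by convert hE using 1; ext i; by_cases hi : i ∈ J <;> simp [hi, hx, hy])
  · intro hy
    by_contra hx
    exact hJc (by convert hE using 1; ext i; by_cases hi : i ∈ J <;> simp [hi, hx, hy])

theorem exists_specializes_of_forall_isOpen_mem_iff {X : Type*} [TopologicalSpace X] {x y z : X}
    (hz : ∀ U : Set X, IsOpen U → z ∈ U → (x ∈ U ↔ y ∈ U)) : ∃ w, x ⤳ w ∧ y ⤳ w := by
  by_cases hxz : x ⤳ z
  · refine ⟨z, hxz, specializes_iff_forall_open.2 fun U hU hzU ↦ ?_⟩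
    exact (hz U hU hzU).1 (specializes_iff_forall_open.1 hxz U hU hzU)
  · obtain ⟨W, hW, hzW, hxW⟩ : ∃ W, IsOpen W ∧ z ∈ W ∧ x ∉ W := by
      simpa [specializes_iff_forall_open] using hxz
    have hyW : y ∉ W := fun hyW ↦ hxW ((hz W hW hzW).2 hyW)
    refine ⟨x, specializes_rfl, specializes_iff_forall_open.2 fun U hU hxU ↦ ?_⟩
    exact ((hz (U ∪ W) (hU.union hW) (Or.inr hzW)).1 (Or.inl hxU)).resolve_right hyW

theorem stmt16 {I : Type*} (E : Set (Set I)) (J : Set I)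
    (hJ : J ∉ E) (hJc : Jᶜ ∉ E)
    (X : Type*) [TopologicalSpace X] (h : AccProp X E) :
    ∀ x y : X, x ≠ y → ∃ z : X, ∀ U : Set X, IsOpen U → z ∈ U → x ∈ U ∧ y ∈ U := by
  classical
  intro x y _
  obtain ⟨z, hz⟩ := h (J.piecewise (fun _ ↦ x) (fun _ ↦ y))
  obtain ⟨w, hxw, hyw⟩ := exists_specializes_of_forall_isOpen_mem_iff fun U hU hzU ↦
    hz.mem_iff_mem_of_piecewise hJ hJc hU hzU
  exact ⟨w, fun U hU hwU ↦ ⟨hxw.mem_open hU hwU, hyw.mem_open hU hwU⟩⟩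
end

section
/- Let I be a set and F a filter on I that is not an ultrafilter. If a T1 topological space X with more than one point exists, then X does not satisfy the F-accumulation property; i.e., a T1 space with at least two points satisfying the F-accumulation property forces F to be an ultrafilter. -/
theorem IsAccPt.setOf_ne_mem {I X : Type*} [TopologicalSpace X] [T1Space X]
    {E : Set (Set I)} {x : I → X} {z y : X} (hz : IsAccPt E x z) (hzy : z ≠ y) :
    {i | x i ≠ y} ∈ E :=
  hz {y}ᶜ isOpen_compl_singleton hzy

theorem stmt17 {I : Type*} (F : Set (Set I)) (hF : IsSetFilter F)
    (X : Type*) [TopologicalSpace X] [T1Space X] (hX : Nontrivial X)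
    (h : AccProp X F) :
    ∀ J : Set I, J ∈ F ∨ Jᶜ ∈ F := by
  classical
  intro J
  obtain ⟨a, b, hab⟩ := hX
  obtain ⟨z, hz⟩ := h fun i => if i ∈ J then a else b
  by_cases hzb : z = b
  · right
    refine hF.mono _ (hz.setOf_ne_mem (hzb ▸ hab.symm)) _ fun i hi hiJ => ?_
    exact hi (if_pos hiJ)
  · left
    refine hF.mono _ (hz.setOf_ne_mem hzb) _ fun i hi => ?_
    by_contra hiJ
    exact hi (if_neg hiJ)
end

section
/- Let α be an ordinal with α > 1 that is not of the form ω^η for any ordinal η, and let X be a T1 topological space with more than one point. Then X does not satisfy CAP*_α. -/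
/-! An ordinal `α > 1` that is not a power of `ω` is additively decomposable: `α = b + c` with
`b, c < α`. Splitting the indices at `b` gives a set `S` with `S` and `Sᶜ` both of order type
`< α`. Send `S` to one point `p` and `Sᶜ` to another point `q`. Whatever `z` is, one of the open
sets `{p}ᶜ`, `{q}ᶜ` contains `z` and picks out only indices in `S` or only indices in `Sᶜ`, so `z`
is not an `α`-complete accumulation point. -/

universe u v

open Ordinal Set

theorem setOType_mono {β : Type*} [LinearOrder β] [WellFoundedLT β] {S T : Set β}
    (h : S ⊆ T) : setOType S ≤ setOType T :=
  type_le_iff'.2 ⟨(OrderEmbedding.ofStrictMono (inclusion h) fun _ _ ↦ id).ltEmbedding⟩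

theorem setOType_le_of_strictMono {β : Type u} [LinearOrder β] [WellFoundedLT β] {S : Set β}
    {c : Ordinal.{u}} (f : S → Iio c) (hf : StrictMono f) : setOType S ≤ c := by
  rw [setOType, ← type_toType c]
  exact type_le_iff'.2
    ⟨(OrderEmbedding.ofStrictMono _ (ToType.mk.strictMono.comp hf)).ltEmbedding⟩

theorem exists_setOType_lt_and_setOType_compl_lt {α : Ordinal.{u}}
    (hα : ¬ IsPrincipal (· + ·) α) :
    ∃ S : Set α.ToType, setOType S < α ∧ setOType Sᶜ < α := by
  obtain ⟨b, hb, c, hc, hbc⟩ := exists_lt_add_of_not_isPrincipal_add hα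
  let ord : α.ToType → Ordinal := fun i ↦ (ToType.mk.symm i : Iio α)
  have ord_strictMono : StrictMono ord := fun _ _ h ↦ ToType.mk.symm.strictMono h
  let S : Set α.ToType := {i | ord i < b}
  have le_of_mem_compl (i : ↥Sᶜ) : b ≤ ord i := not_lt.1 (show ¬ ord i < b from i.2)
  have sub_lt (i : ↥Sᶜ) : ord i - b < c := by
    rw [sub_lt_of_le (le_of_mem_compl i), hbc]
    exact (ToType.mk.symm i.1).2
  refine ⟨S, ?_, ?_⟩
  · refine (setOType_le_of_strictMono (S := S) (fun i ↦ ⟨ord i, i.2⟩) ?_).trans_lt hb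
    exact fun _ _ h ↦ ord_strictMono h
  · refine (setOType_le_of_strictMono (S := Sᶜ) (fun i ↦ ⟨ord i - b, sub_lt i⟩) ?_).trans_lt hc
    intro i j h
    change ord i - b < ord j - b
    rw [lt_sub, Ordinal.add_sub_cancel_of_le (le_of_mem_compl i)]
    exact ord_strictMono h

theorem not_capstar_of_setOType_lt_and_setOType_compl_lt {α : Ordinal.{u}} {X : Type v}
    [TopologicalSpace X] [T1Space X] [Nontrivial X] {S : Set α.ToType}
    (hS : setOType S < α) (hSc : setOType Sᶜ < α) : ¬ CAPstar α X := by
  classical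
  obtain ⟨p, q, hpq⟩ := exists_pair_ne X
  intro hcap
  let x : α.ToType → X := fun i ↦ if i ∈ S then p else q
  obtain ⟨z, hz⟩ := hcap x
  by_cases hzq : z = q
  · have hsub : {i | x i ∈ ({p}ᶜ : Set X)} ⊆ Sᶜ := fun i hi hiS ↦ hi (if_pos hiS)
    have hzp : z ∈ ({p}ᶜ : Set X) := hzq ▸ hpq.symm
    exact hSc.not_ge ((hz _ isOpen_compl_singleton hzp).symm.trans_le (setOType_mono hsub))
  · have hsub : {i | x i ∈ ({q}ᶜ : Set X)} ⊆ S := fun i hi ↦ by_contra fun hiS ↦ hi (if_neg hiS)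
    exact hS.not_ge ((hz _ isOpen_compl_singleton hzq).symm.trans_le (setOType_mono hsub))

theorem stmt18 (α : Ordinal) (hα1 : 1 < α)
    (hα : ¬ ∃ η : Ordinal, α = Ordinal.omega0 ^ η)
    (X : Type*) [TopologicalSpace X] [T1Space X] (hX : Nontrivial X) :
    ¬ CAPstar α X := by
  have hdec : ¬ IsPrincipal (· + ·) α := by
    rw [isPrincipal_add_iff_zero_or_omega0_opow]
    rintro (rfl | ⟨η, rfl⟩)
    · exact not_lt_of_ge zero_le_one hα1
    · exact hα ⟨η, rfl⟩
  obtain ⟨S, hS, hSc⟩ := exists_setOType_lt_and_setOType_compl_lt hdec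
  exact not_capstar_of_setOType_lt_and_setOType_compl_lt hS hSc
end
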